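/- arXiv:1604.03007 — 7 statements merged into one kernel-verified Lean document; each statement's English description precedes it below -/
import Mathlib

section
/- Let r₁, ṙ₁, r₂, ṙ₂ ∈ ℝ³ with r₁ ≠ 0, r₂ ≠ 0, and let μ ∈ ℝ. Define for j = 1, 2 the Laplace–Lenz vectors μL_j = (|ṙ_j|² − μ/|r_j|)r_j − (r_j·ṙ_j)ṙ_j and energies E_j = ½|ṙ_j|² − μ/|r_j|. Then the vector ξ := [μ(L₁ − L₂) − (E₁ r₁ − E₂ r₂)] × (r₁ − r₂), in which the terms μ/|r₁| and μ/|r₂| cancel, satisfies ξ = ½(|ṙ₂|² − |ṙ₁|²)·(r₁ × r₂) − (ṙ₁·r₁)·(ṙ₁ × (r₁ − r₂)) + (ṙ₂·r₂)·(ṙ₂ × (r₁ − r₂)). -/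
open Matrix

/-!
Subtracting `E_j r_j` from `μL_j` cancels the potential term, leaving
`½|ṙ_j|² r_j − (r_j·ṙ_j) ṙ_j`. Crossing with `r₁ − r₂` kills the `r_j × r_j` terms, so the two
`½|ṙ_j|² r_j` contributions collapse onto `r₁ × r₂`, while the `ṙ_j` terms pass through linearly.
-/

lemma smul_sub_smul_cross_sub {R : Type*} [CommRing R] (a b : R) (r₁ r₂ : Fin 3 → R) :
    (a • r₁ - b • r₂) ⨯₃ (r₁ - r₂) = (b - a) • (r₁ ⨯₃ r₂) := by
  simp only [map_sub, map_smul, LinearMap.sub_apply, LinearMap.smul_apply, cross_self,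
    ← cross_anticomm r₁ r₂]
  module

theorem xi_formula_general (r₁ rdot₁ r₂ rdot₂ : Fin 3 → ℝ) (μ : ℝ)
    (muL₁ muL₂ : Fin 3 → ℝ) (E₁ E₂ : ℝ) (ξ : Fin 3 → ℝ)
    (hL₁ : muL₁ = (rdot₁ ⬝ᵥ rdot₁ - μ / Real.sqrt (r₁ ⬝ᵥ r₁)) • r₁ - (r₁ ⬝ᵥ rdot₁) • rdot₁)
    (hL₂ : muL₂ = (rdot₂ ⬝ᵥ rdot₂ - μ / Real.sqrt (r₂ ⬝ᵥ r₂)) • r₂ - (r₂ ⬝ᵥ rdot₂) • rdot₂)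
    (hE₁ : E₁ = (1 / 2) * (rdot₁ ⬝ᵥ rdot₁) - μ / Real.sqrt (r₁ ⬝ᵥ r₁))
    (hE₂ : E₂ = (1 / 2) * (rdot₂ ⬝ᵥ rdot₂) - μ / Real.sqrt (r₂ ⬝ᵥ r₂))
    (hξ : ξ = ((muL₁ - muL₂) - (E₁ • r₁ - E₂ • r₂)) ⨯₃ (r₁ - r₂)) :
    ξ = ((1 / 2) * (rdot₂ ⬝ᵥ rdot₂ - rdot₁ ⬝ᵥ rdot₁)) • (r₁ ⨯₃ r₂)
        - (rdot₁ ⬝ᵥ r₁) • (rdot₁ ⨯₃ (r₁ - r₂))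
        + (rdot₂ ⬝ᵥ r₂) • (rdot₂ ⨯₃ (r₁ - r₂)) := by
  have hcancel : (muL₁ - muL₂) - (E₁ • r₁ - E₂ • r₂) =
      (((1 / 2) * (rdot₁ ⬝ᵥ rdot₁)) • r₁ - ((1 / 2) * (rdot₂ ⬝ᵥ rdot₂)) • r₂)
        - ((rdot₁ ⬝ᵥ r₁) • rdot₁ - (rdot₂ ⬝ᵥ r₂) • rdot₂) := by
    rw [hL₁, hL₂, hE₁, hE₂, dotProduct_comm rdot₁ r₁, dotProduct_comm rdot₂ r₂]
    module
  rw [hξ, hcancel, LinearMap.map_sub₂, smul_sub_smul_cross_sub, LinearMap.map_sub₂,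
    LinearMap.map_smul₂, LinearMap.map_smul₂]
  module

/-- For `r₁, r₂ ≠ 0`, with `μL_j = (|ṙ_j|² − μ/|r_j|) r_j − (r_j·ṙ_j) ṙ_j`
and `E_j = ½|ṙ_j|² − μ/|r_j|`, the vector
`ξ = [μ(L₁ − L₂) − (E₁ r₁ − E₂ r₂)] × (r₁ − r₂)` (in which `μ/|r₁|`, `μ/|r₂|` cancel)
satisfies
`ξ = ½(|ṙ₂|² − |ṙ₁|²)(r₁ × r₂) − (ṙ₁·r₁)(ṙ₁ × (r₁ − r₂)) + (ṙ₂·r₂)(ṙ₂ × (r₁ − r₂))`. -/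
theorem xi_formula (r₁ rdot₁ r₂ rdot₂ : Fin 3 → ℝ) (h₁ : r₁ ≠ 0) (h₂ : r₂ ≠ 0) (μ : ℝ)
    (muL₁ muL₂ : Fin 3 → ℝ) (E₁ E₂ : ℝ) (ξ : Fin 3 → ℝ)
    (hL₁ : muL₁ = (rdot₁ ⬝ᵥ rdot₁ - μ / Real.sqrt (r₁ ⬝ᵥ r₁)) • r₁ - (r₁ ⬝ᵥ rdot₁) • rdot₁)
    (hL₂ : muL₂ = (rdot₂ ⬝ᵥ rdot₂ - μ / Real.sqrt (r₂ ⬝ᵥ r₂)) • r₂ - (r₂ ⬝ᵥ rdot₂) • rdot₂)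
    (hE₁ : E₁ = (1 / 2) * (rdot₁ ⬝ᵥ rdot₁) - μ / Real.sqrt (r₁ ⬝ᵥ r₁))
    (hE₂ : E₂ = (1 / 2) * (rdot₂ ⬝ᵥ rdot₂) - μ / Real.sqrt (r₂ ⬝ᵥ r₂))
    (hξ : ξ = ((muL₁ - muL₂) - (E₁ • r₁ - E₂ • r₂)) ⨯₃ (r₁ - r₂)) :
    ξ = ((1 / 2) * (rdot₂ ⬝ᵥ rdot₂ - rdot₁ ⬝ᵥ rdot₁)) • (r₁ ⨯₃ r₂)
        - (rdot₁ ⬝ᵥ r₁) • (rdot₁ ⨯₃ (r₁ - r₂))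
        + (rdot₂ ⬝ᵥ r₂) • (rdot₂ ⨯₃ (r₁ - r₂)) :=
  xi_formula_general r₁ rdot₁ r₂ rdot₂ μ muL₁ muL₂ E₁ E₂ ξ hL₁ hL₂ hE₁ hE₂ hξ
end

section
/- Let D₁, D₂, J ∈ ℝ³ with D₁ × D₂ ≠ 0. Define ρ̇₁ = ((J × D₂)·(D₁ × D₂)) / |D₁ × D₂|² and ρ̇₂ = ((J × D₁)·(D₁ × D₂)) / |D₁ × D₂|². Then (D₁ ρ̇₁ − D₂ ρ̇₂ − J) × (D₁ × D₂) = 0; that is, with these values of ρ̇₁, ρ̇₂ the residual of the angular momentum equation is parallel to D₁ × D₂. -/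
open Matrix

/-!
When `N = b × c ≠ 0`, the vectors `b`, `c`, `N` form a frame of space, and the coordinates of
any `a` in it are `(a × c)·N / |N|²`, `-(a × b)·N / |N|²` and `a·N / |N|²`. The two given radial
velocities are exactly the first two coordinates of `J`, so the residual is `-(J·N / |N|²) N`.
-/

theorem smul_eq_crossProduct_expansion {R : Type*} [CommRing R] (a b c : Fin 3 → R) :
    ((b ⨯₃ c) ⬝ᵥ (b ⨯₃ c)) • a =
      ((a ⨯₃ c) ⬝ᵥ (b ⨯₃ c)) • b - ((a ⨯₃ b) ⬝ᵥ (b ⨯₃ c)) • c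
        + (a ⬝ᵥ (b ⨯₃ c)) • (b ⨯₃ c) := by
  ext i
  fin_cases i <;> simp [crossProduct, dotProduct, Fin.sum_univ_succ] <;> ring

theorem div_smul_sub_div_smul_sub_eq_smul_crossProduct {K : Type*} [Field K] (a b c : Fin 3 → K)
    (h : (b ⨯₃ c) ⬝ᵥ (b ⨯₃ c) ≠ 0) :
    ((a ⨯₃ c) ⬝ᵥ (b ⨯₃ c) / ((b ⨯₃ c) ⬝ᵥ (b ⨯₃ c))) • b
        - ((a ⨯₃ b) ⬝ᵥ (b ⨯₃ c) / ((b ⨯₃ c) ⬝ᵥ (b ⨯₃ c))) • c - a =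
      -(a ⬝ᵥ (b ⨯₃ c) / ((b ⨯₃ c) ⬝ᵥ (b ⨯₃ c))) • (b ⨯₃ c) := by
  apply smul_right_injective _ h
  simp only [neg_smul, smul_sub, smul_neg, smul_smul, mul_div_cancel₀ _ h,
    smul_eq_crossProduct_expansion]
  abel

/-- If `D₁ × D₂ ≠ 0` and
`ρ̇₁ = ((J × D₂)·(D₁ × D₂)) / |D₁ × D₂|²`, `ρ̇₂ = ((J × D₁)·(D₁ × D₂)) / |D₁ × D₂|²`,
then `(D₁ ρ̇₁ − D₂ ρ̇₂ − J) × (D₁ × D₂) = 0`: the residual of the angular momentum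
equation is parallel to `D₁ × D₂`. -/
theorem residual_parallel (D₁ D₂ J : Fin 3 → ℝ) (hD : D₁ ⨯₃ D₂ ≠ 0)
    (ρdot₁ ρdot₂ : ℝ)
    (h₁ : ρdot₁ = ((J ⨯₃ D₂) ⬝ᵥ (D₁ ⨯₃ D₂)) / ((D₁ ⨯₃ D₂) ⬝ᵥ (D₁ ⨯₃ D₂)))
    (h₂ : ρdot₂ = ((J ⨯₃ D₁) ⬝ᵥ (D₁ ⨯₃ D₂)) / ((D₁ ⨯₃ D₂) ⬝ᵥ (D₁ ⨯₃ D₂))) :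
    (ρdot₁ • D₁ - ρdot₂ • D₂ - J) ⨯₃ (D₁ ⨯₃ D₂) = 0 := by
  have hN : (D₁ ⨯₃ D₂) ⬝ᵥ (D₁ ⨯₃ D₂) ≠ 0 := mt dotProduct_self_eq_zero.mp hD
  rw [h₁, h₂, div_smul_sub_div_smul_sub_eq_smul_crossProduct J D₁ D₂ hN, LinearMap.map_smul₂,
    cross_self, smul_zero]
end

section
/- Let F be a field and let q = b₂X² + b₁X + b₀ ∈ F[X] with b₂ ≠ 0, and p = a₅X⁵ + a₄X⁴ + a₃X³ + a₂X² + a₁X + a₀ ∈ F[X] with a₅ ≠ 0. Define β₂ = −b₁/b₂, γ₂ = −b₀/b₂, β_{h+1} = β_hβ₂ + γ_h, γ_{h+1} = β_hγ₂ (h = 2, 3, 4), and set p̃ = ã₁X + ã₀ where ã₁ = a₁ + Σ_{h=2}^{5} a_h β_h and ã₀ = a₀ + Σ_{h=2}^{5} a_h γ_h. If ã₁ ≠ 0, then the resultants satisfy Res(p, q) = b₂⁴ · Res(p̃, q). -/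
open Polynomial

/-!
Since `X² ≡ β₂ X + γ₂ (mod q)`, the recursion gives `X^h ≡ β_h X + γ_h (mod q)`, hence
`p ≡ p̃ (mod q)`. Adding multiples of `q` to `p` is a column operation on the Sylvester matrix,
so the resultant in formal degrees `(5, 2)` is unchanged when `p` is replaced by `p̃`; expanding
along the last row, each of the four surplus formal degrees of `p̃` then contributes a factor `b₂`.
-/

/-- The Sylvester matrix of `f` and `g` with formal degrees `m` and `n`:
an `(m+n) × (m+n)` matrix whose first `n` columns are shifted copies of the
coefficients of `f` and whose last `m` columns are shifted copies of the
coefficients of `g`. -/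
noncomputable def sylvesterMatrix {R : Type*} [CommRing R] (m n : ℕ) (f g : R[X]) :
    Matrix (Fin (m + n)) (Fin (m + n)) R :=
  Matrix.of fun i j =>
    if (j : ℕ) < n then
      (if (j : ℕ) ≤ (i : ℕ) then f.coeff ((i : ℕ) - (j : ℕ)) else 0)
    else
      (if (j : ℕ) - n ≤ (i : ℕ) then g.coeff ((i : ℕ) - ((j : ℕ) - n)) else 0)

/-- The resultant of `f` and `g` (with formal degrees `m`, `n`), i.e. the
determinant of their Sylvester matrix. -/
noncomputable def resultant {R : Type*} [CommRing R] (m n : ℕ) (f g : R[X]) : R :=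
  (sylvesterMatrix m n f g).det

theorem sylvesterMatrix_eq_reindex_sylvester {R : Type*} [CommRing R] {m n : ℕ} {f g : R[X]}
    (hf : f.natDegree ≤ m) (hg : g.natDegree ≤ n) :
    sylvesterMatrix m n f g =
      (sylvester g f n m).reindex (finCongr (add_comm n m)) (finCongr (add_comm n m)) := by
  ext i j
  obtain ⟨j, rfl⟩ := (finCongr (add_comm n m)).surjective j
  rw [Matrix.reindex_apply, Matrix.submatrix_apply, Equiv.symm_apply_apply]
  induction j using Fin.addCases with
  | left j =>
    simp only [sylvesterMatrix, sylvester, Matrix.of_apply, finCongr_apply, finCongr_symm,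
      Fin.val_cast, Fin.val_castAdd, Fin.is_lt, if_true, Set.mem_Icc, Fin.addCases_left]
    split_ifs <;> first | rfl | omega | exact coeff_eq_zero_of_natDegree_lt (by omega)
  | right j =>
    simp only [sylvesterMatrix, sylvester, Matrix.of_apply, finCongr_apply, finCongr_symm,
      Fin.cast_natAdd, Fin.val_cast, Fin.val_addNat, add_lt_iff_neg_right, not_lt_zero, if_false,
      add_tsub_cancel_right, Set.mem_Icc, Fin.addCases_right]
    split_ifs <;> first | rfl | omega | exact coeff_eq_zero_of_natDegree_lt (by omega)

theorem resultant_eq_polynomial_resultant {R : Type*} [CommRing R] {m n : ℕ} {f g : R[X]}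
    (hf : f.natDegree ≤ m) (hg : g.natDegree ≤ n) :
    _root_.resultant m n f g = Polynomial.resultant g f n m := by
  rw [_root_.resultant, sylvesterMatrix_eq_reindex_sylvester hf hg, Matrix.det_reindex_self,
    Polynomial.resultant]

theorem Polynomial.dvd_X_pow_succ_sub {R : Type*} [CommRing R] {q : R[X]} {β₂ γ₂ β γ : R} {n : ℕ}
    (h₂ : q ∣ X ^ 2 - (C β₂ * X + C γ₂)) (hn : q ∣ X ^ n - (C β * X + C γ)) :
    q ∣ X ^ (n + 1) - (C (β * β₂ + γ) * X + C (β * γ₂)) := by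
  convert (hn.mul_left X).add (h₂.mul_left (C β)) using 1
  simp only [map_add, map_mul]
  ring

theorem Polynomial.quadratic_dvd_X_sq_sub {F : Type*} [Field F] {b₀ b₁ b₂ : F} (hb : b₂ ≠ 0) :
    C b₂ * X ^ 2 + C b₁ * X + C b₀ ∣ X ^ 2 - (C (-b₁ / b₂) * X + C (-b₀ / b₂)) := by
  refine ⟨C b₂⁻¹, ?_⟩
  have hinv : C b₂ * C b₂⁻¹ = 1 := by rw [← C_mul, mul_inv_cancel₀ hb, C_1]
  simp only [div_eq_mul_inv, map_neg, map_mul]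
  linear_combination (-X ^ 2 : F[X]) * hinv

theorem Polynomial.resultant_eq_leadingCoeff_pow_mul_of_dvd_sub {F : Type*} [Field F]
    {p q r : F[X]} {m n k : ℕ} (hq : q.natDegree = n) (hp : p.natDegree ≤ m + k)
    (hr : r.natDegree ≤ m) (hdvd : q ∣ p - r) :
    resultant q p n (m + k) = q.leadingCoeff ^ k * resultant q r n m := by
  obtain ⟨w, hw⟩ := hdvd
  obtain rfl : p = r + q * w := by rw [← hw, add_sub_cancel]
  rw [leadingCoeff, hq, ← resultant_add_right_deg _ _ _ _ _ hr]
  rcases eq_or_ne (q * w) 0 with h0 | h0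
  · rw [h0, add_zero]
  · refine resultant_add_mul_right _ _ _ _ _ ?_ hq.le
    have hqw : (q * w).natDegree ≤ m + k := by
      simpa using (natDegree_sub_le (r + q * w) r).trans (max_le hp (hr.trans (by omega)))
    have := natDegree_mul (left_ne_zero_of_mul h0) (right_ne_zero_of_mul h0)
    omega

theorem resultant_reduction_deg_five_general {F : Type*} [Field F]
    (b₀ b₁ b₂ a₀ a₁ a₂ a₃ a₄ a₅ : F) (hb : b₂ ≠ 0)
    (β₂ γ₂ β₃ γ₃ β₄ γ₄ β₅ γ₅ ta₁ ta₀ : F)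
    (hβ₂ : β₂ = -b₁ / b₂) (hγ₂ : γ₂ = -b₀ / b₂)
    (hβ₃ : β₃ = β₂ * β₂ + γ₂) (hγ₃ : γ₃ = β₂ * γ₂)
    (hβ₄ : β₄ = β₃ * β₂ + γ₃) (hγ₄ : γ₄ = β₃ * γ₂)
    (hβ₅ : β₅ = β₄ * β₂ + γ₄) (hγ₅ : γ₅ = β₄ * γ₂)
    (hta₁ : ta₁ = a₁ + (a₂ * β₂ + a₃ * β₃ + a₄ * β₄ + a₅ * β₅))
    (hta₀ : ta₀ = a₀ + (a₂ * γ₂ + a₃ * γ₃ + a₄ * γ₄ + a₅ * γ₅)) :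
    _root_.resultant 5 2
        (C a₅ * X ^ 5 + C a₄ * X ^ 4 + C a₃ * X ^ 3 + C a₂ * X ^ 2 + C a₁ * X + C a₀)
        (C b₂ * X ^ 2 + C b₁ * X + C b₀)
      = b₂ ^ 4 *
        _root_.resultant 1 2 (C ta₁ * X + C ta₀) (C b₂ * X ^ 2 + C b₁ * X + C b₀) := by
  set p := C a₅ * X ^ 5 + C a₄ * X ^ 4 + C a₃ * X ^ 3 + C a₂ * X ^ 2 + C a₁ * X + C a₀
  set q := C b₂ * X ^ 2 + C b₁ * X + C b₀
  have h₂ : q ∣ X ^ 2 - (C β₂ * X + C γ₂) := by rw [hβ₂, hγ₂]; exact quadratic_dvd_X_sq_sub hb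
  have h₃ : q ∣ X ^ 3 - (C β₃ * X + C γ₃) := by rw [hβ₃, hγ₃]; exact dvd_X_pow_succ_sub h₂ h₂
  have h₄ : q ∣ X ^ 4 - (C β₄ * X + C γ₄) := by rw [hβ₄, hγ₄]; exact dvd_X_pow_succ_sub h₂ h₃
  have h₅ : q ∣ X ^ 5 - (C β₅ * X + C γ₅) := by rw [hβ₅, hγ₅]; exact dvd_X_pow_succ_sub h₂ h₄
  have hdvd : q ∣ p - (C ta₁ * X + C ta₀) := by
    convert (((h₂.mul_left (C a₂)).add (h₃.mul_left (C a₃))).add (h₄.mul_left (C a₄))).add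
      (h₅.mul_left (C a₅)) using 1
    simp only [p, hta₁, hta₀, map_add, map_mul]
    ring
  have hq : q.natDegree = 2 := natDegree_quadratic hb
  have hp : p.natDegree ≤ 1 + 4 := by simp only [p]; compute_degree
  rw [resultant_eq_polynomial_resultant hp hq.le,
    resultant_eq_polynomial_resultant natDegree_linear_le hq.le, ← leadingCoeff_quadratic hb]
  exact resultant_eq_leadingCoeff_pow_mul_of_dvd_sub hq hp natDegree_linear_le hdvd

/-- Let `q = b₂X² + b₁X + b₀` with `b₂ ≠ 0` and
`p = a₅X⁵ + a₄X⁴ + a₃X³ + a₂X² + a₁X + a₀` with `a₅ ≠ 0`. With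
`β₂ = −b₁/b₂`, `γ₂ = −b₀/b₂`, `β_{h+1} = β_hβ₂ + γ_h`, `γ_{h+1} = β_hγ₂`, set
`p̃ = ã₁X + ã₀` where `ã₁ = a₁ + Σ_{h=2}^{5} a_h β_h`, `ã₀ = a₀ + Σ_{h=2}^{5} a_h γ_h`.
If `ã₁ ≠ 0`, then `Res(p,q) = b₂⁴ · Res(p̃,q)`. -/
theorem resultant_reduction_deg_five {F : Type*} [Field F]
    (b₀ b₁ b₂ a₀ a₁ a₂ a₃ a₄ a₅ : F) (hb : b₂ ≠ 0) (ha : a₅ ≠ 0)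
    (β₂ γ₂ β₃ γ₃ β₄ γ₄ β₅ γ₅ ta₁ ta₀ : F)
    (hβ₂ : β₂ = -b₁ / b₂) (hγ₂ : γ₂ = -b₀ / b₂)
    (hβ₃ : β₃ = β₂ * β₂ + γ₂) (hγ₃ : γ₃ = β₂ * γ₂)
    (hβ₄ : β₄ = β₃ * β₂ + γ₃) (hγ₄ : γ₄ = β₃ * γ₂)
    (hβ₅ : β₅ = β₄ * β₂ + γ₄) (hγ₅ : γ₅ = β₄ * γ₂)
    (hta₁ : ta₁ = a₁ + (a₂ * β₂ + a₃ * β₃ + a₄ * β₄ + a₅ * β₅))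
    (hta₀ : ta₀ = a₀ + (a₂ * γ₂ + a₃ * γ₃ + a₄ * γ₄ + a₅ * γ₅))
    (h : ta₁ ≠ 0) :
    _root_.resultant 5 2
        (C a₅ * X ^ 5 + C a₄ * X ^ 4 + C a₃ * X ^ 3 + C a₂ * X ^ 2 + C a₁ * X + C a₀)
        (C b₂ * X ^ 2 + C b₁ * X + C b₀)
      = b₂ ^ 4 *
        _root_.resultant 1 2 (C ta₁ * X + C ta₀) (C b₂ * X ^ 2 + C b₁ * X + C b₀) :=
  resultant_reduction_deg_five_general b₀ b₁ b₂ a₀ a₁ a₂ a₃ a₄ a₅ hb β₂ γ₂ β₃ γ₃ β₄ γ₄ β₅ γ₅ ta₁ ta₀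
    hβ₂ hγ₂ hβ₃ hγ₃ hβ₄ hγ₄ hβ₅ hγ₅ hta₁ hta₀
end

section
/- Let R be a commutative ring and let p̃₁ = a·X + c and p̃₂ = b·X + d be polynomials in R[X]. Suppose β, γ ∈ R satisfy β·a + γ·b = 1 (a Bézout relation between the leading coefficients). Define w = β·p̃₁ + γ·p̃₂ ∈ R[X] and v = a·d − c·b ∈ R (so that, as a polynomial, v = a·p̃₂ − b·p̃₁). Then the ideal of R[X] generated by {w, v} equals the ideal generated by {p̃₁, p̃₂}. -/
open Polynomial

/-! The pair `(w, v)` is the image of `(p̃₁, p̃₂)` under the matrix `[[β, γ], [-b, a]]`, whose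
determinant `βa + γb` is `1`; a unimodular change of generators does not change the ideal. -/

theorem Ideal.span_pair_eq_of_det_eq_one {S : Type*} [CommRing S] {x y p q r s : S}
    (hdet : p * s - q * r = 1) :
    Ideal.span {p * x + q * y, r * x + s * y} = Ideal.span {x, y} := by
  apply le_antisymm <;> rw [Ideal.span_le] <;> rintro z (rfl | rfl) <;>
    rw [SetLike.mem_coe, Ideal.mem_span_pair]
  · exact ⟨p, q, rfl⟩
  · exact ⟨r, s, rfl⟩
  · exact ⟨s, -q, by linear_combination z * hdet⟩
  · exact ⟨-r, p, by linear_combination z * hdet⟩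

/-- Let `R` be a commutative ring, `p̃₁ = aX + c`, `p̃₂ = bX + d`
in `R[X]`, and suppose `βa + γb = 1`. Define `w = β p̃₁ + γ p̃₂` and
`v = ad − cb` (the resultant of `p̃₁`, `p̃₂`, regarded as a constant polynomial;
as a polynomial `v = a p̃₂ − b p̃₁`). Then `⟨w, v⟩ = ⟨p̃₁, p̃₂⟩` as ideals of `R[X]`. -/
theorem ideal_span_resultant_linear {R : Type*} [CommRing R] (a b c d β γ : R)
    (hbez : β * a + γ * b = 1)
    (p₁ p₂ w : R[X]) (v : R)
    (hp₁ : p₁ = C a * X + C c) (hp₂ : p₂ = C b * X + C d)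
    (hw : w = C β * p₁ + C γ * p₂) (hv : v = a * d - c * b) :
    Ideal.span ({w, C v} : Set R[X]) = Ideal.span ({p₁, p₂} : Set R[X]) := by
  have hres : C v = -C b * p₁ + C a * p₂ := by
    rw [hv, hp₁, hp₂]
    simp only [map_sub, map_mul]
    ring
  have hdet : C β * C a - C γ * -C b = 1 := by
    rw [mul_neg, sub_neg_eq_add, ← C_mul, ← C_mul, ← C_add, hbez, C_1]
  rw [hw, hres]
  exact Ideal.span_pair_eq_of_det_eq_one hdet
end

section
/- Let c₁, c₂, c₃, D₁, D₂, D₃ ∈ ℝ³ and assume (D₁ × D₂)·D₃ ≠ 0. Then the six scalar equations (c₁ − c₂)·(D₁ × D₂) = 0, (c₁ − c₂)·(D₁ × (D₁ × D₂)) = 0, (c₂ − c₃)·(D₂ × D₃) = 0, (c₂ − c₃)·(D₂ × (D₂ × D₃)) = 0, (c₃ − c₁)·(D₃ × D₁) = 0, (c₃ − c₁)·(D₃ × (D₃ × D₁)) = 0 hold if and only if c₁ = c₂, c₂ = c₃ and c₃ = c₁. -/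
open Matrix

/-!
If `d ⨯₃ e ≠ 0`, the vectors `d`, `d ⨯₃ e`, `d ⨯₃ (d ⨯₃ e)` form an orthogonal basis of the
space, so the two projections of `cᵢ - cⱼ` say exactly that `cᵢ - cⱼ` is parallel to `Dᵢ`.
The three differences sum to zero, and `D₁, D₂, D₃` are linearly independent because their
triple product is their determinant; hence all three differences vanish.
-/

section CrossProduct

variable {R : Type*} [CommRing R]

lemma cross_ne_zero_of_triple_product_ne_zero {u v w : Fin 3 → R} (h : u ⬝ᵥ v ⨯₃ w ≠ 0) :
    v ⨯₃ w ≠ 0 ∧ w ⨯₃ u ≠ 0 ∧ u ⨯₃ v ≠ 0 := by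
  have ne_zero {x y z : Fin 3 → R} (h : x ⬝ᵥ y ⨯₃ z ≠ 0) : y ⨯₃ z ≠ 0 := fun h0 ↦ by
    simp [h0] at h
  refine ⟨ne_zero h, ne_zero (x := v) ?_, ne_zero (x := w) ?_⟩
  · rwa [← triple_product_permutation]
  · rwa [← triple_product_permutation, ← triple_product_permutation]

lemma eq_zero_of_smul_add_smul_add_smul_eq_zero [IsDomain R] {u v w : Fin 3 → R}
    (h : u ⬝ᵥ v ⨯₃ w ≠ 0) {a b c : R} (habc : a • u + b • v + c • w = 0) :
    a = 0 ∧ b = 0 ∧ c = 0 := by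
  rw [triple_product_eq_det] at h
  have hli : LinearIndependent R ![u, v, w] := linearIndependent_rows_of_det_ne_zero h
  have hcoeff := Fintype.linearIndependent_iff.mp hli ![a, b, c]
    (by simpa [Fin.sum_univ_three, add_assoc] using habc)
  exact ⟨hcoeff 0, hcoeff 1, hcoeff 2⟩

/-- The expansion of `v` in the orthogonal basis `d`, `d ⨯₃ e`, `d ⨯₃ (d ⨯₃ e)`, with the
denominators cleared. -/
lemma orthogonal_expansion (v d e : Fin 3 → R) :
    ((d ⨯₃ e) ⬝ᵥ (d ⨯₃ e)) • ((d ⬝ᵥ d) • v - (v ⬝ᵥ d) • d) =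
      ((d ⬝ᵥ d) * (v ⬝ᵥ d ⨯₃ e)) • d ⨯₃ e + (v ⬝ᵥ d ⨯₃ (d ⨯₃ e)) • d ⨯₃ (d ⨯₃ e) := by
  ext i
  fin_cases i <;>
  · simp only [dotProduct, cross_apply, Fin.isValue, Fin.sum_univ_three, cons_val_zero, cons_val_one,
      cons_val, Fin.zero_eta, Fin.mk_one, Fin.reduceFinMk, Pi.smul_apply, Pi.sub_apply, Pi.add_apply,
      smul_eq_mul, smul_cons, smul_empty]
    ring

end CrossProduct

lemma exists_eq_smul_of_dotProduct_cross_eq_zero {K : Type*} [Field K] [LinearOrder K]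
    [IsStrictOrderedRing K] {v d e : Fin 3 → K} (hde : d ⨯₃ e ≠ 0)
    (h₁ : v ⬝ᵥ d ⨯₃ e = 0) (h₂ : v ⬝ᵥ d ⨯₃ (d ⨯₃ e) = 0) : ∃ a : K, v = a • d := by
  have hd : d ⬝ᵥ d ≠ 0 := by
    rintro hd
    simp [dotProduct_self_eq_zero.mp hd] at hde
  have hn : (d ⨯₃ e) ⬝ᵥ (d ⨯₃ e) ≠ 0 := mt dotProduct_self_eq_zero.mp hde
  have hexp := orthogonal_expansion v d e
  rw [h₁, h₂, mul_zero, zero_smul, zero_smul, add_zero, smul_eq_zero, sub_eq_zero] at hexp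
  refine ⟨(v ⬝ᵥ d) / (d ⬝ᵥ d), ?_⟩
  rw [div_eq_inv_mul, mul_smul, ← hexp.resolve_left hn, inv_smul_smul₀ hd]

/-- If `(D₁ × D₂)·D₃ ≠ 0`, then the six projected equations
hold if and only if `c₁ = c₂`, `c₂ = c₃` and `c₃ = c₁`. -/
theorem six_projections_iff (c₁ c₂ c₃ D₁ D₂ D₃ : Fin 3 → ℝ)
    (h : (D₁ ⨯₃ D₂) ⬝ᵥ D₃ ≠ 0) :
    ((c₁ - c₂) ⬝ᵥ (D₁ ⨯₃ D₂) = 0 ∧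
     (c₁ - c₂) ⬝ᵥ (D₁ ⨯₃ (D₁ ⨯₃ D₂)) = 0 ∧
     (c₂ - c₃) ⬝ᵥ (D₂ ⨯₃ D₃) = 0 ∧
     (c₂ - c₃) ⬝ᵥ (D₂ ⨯₃ (D₂ ⨯₃ D₃)) = 0 ∧
     (c₃ - c₁) ⬝ᵥ (D₃ ⨯₃ D₁) = 0 ∧
     (c₃ - c₁) ⬝ᵥ (D₃ ⨯₃ (D₃ ⨯₃ D₁)) = 0) ↔
    (c₁ = c₂ ∧ c₂ = c₃ ∧ c₃ = c₁) := by
  refine ⟨fun ⟨h₁₂, h₁₂', h₂₃, h₂₃', h₃₁, h₃₁'⟩ ↦ ?_, by rintro ⟨rfl, rfl, -⟩; simp⟩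
  have hT : D₃ ⬝ᵥ D₁ ⨯₃ D₂ ≠ 0 := by rwa [dotProduct_comm]
  obtain ⟨hD₁₂, hD₂₃, hD₃₁⟩ := cross_ne_zero_of_triple_product_ne_zero hT
  obtain ⟨a, ha⟩ := exists_eq_smul_of_dotProduct_cross_eq_zero hD₁₂ h₁₂ h₁₂'
  obtain ⟨b, hb⟩ := exists_eq_smul_of_dotProduct_cross_eq_zero hD₂₃ h₂₃ h₂₃'
  obtain ⟨c, hc⟩ := exists_eq_smul_of_dotProduct_cross_eq_zero hD₃₁ h₃₁ h₃₁'
  have hsum : c • D₃ + a • D₁ + b • D₂ = 0 := by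
    rw [← ha, ← hb, ← hc]
    abel
  obtain ⟨rfl, rfl, rfl⟩ := eq_zero_of_smul_add_smul_add_smul_eq_zero hT hsum
  simp only [zero_smul, sub_eq_zero] at ha hb hc
  exact ⟨ha, hb, hc⟩
end

section
/- Let D₁, D₂, D₃ ∈ ℝ³ with (D₁ × D₂)·D₃ ≠ 0. Let Π₁₂ be the linear span of {D₁ × D₂, D₁ × (D₁ × D₂)} and Π₂₃ the linear span of {D₂ × D₃, D₂ × (D₂ × D₃)}. Then Π₁₂ ∩ Π₂₃ equals the line spanned by the vector D₁ × D₂. -/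
/-!
For `v ⨯₃ w ≠ 0` the vectors `v ⨯₃ w` and `v ⨯₃ (v ⨯₃ w)` are independent and orthogonal to `v`,
so they span the plane `v⊥`. Hence `Π₁₂ = D₁⊥` and `Π₂₃ = D₂⊥`, and `D₁⊥ ∩ D₂⊥` is the line
through `D₁ ⨯₃ D₂`. The hypothesis `(D₁ ⨯₃ D₂) ⬝ᵥ D₃ ≠ 0` makes both `D₁ ⨯₃ D₂` and
`D₂ ⨯₃ D₃` nonzero.
-/

open Matrix

section Field

variable {K : Type*} [Field K]

theorem mem_span_singleton_of_cross_eq_zero {c x : Fin 3 → K} (hc : c ≠ 0) (hcx : c ⨯₃ x = 0) :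
    x ∈ Submodule.span K {c} := by
  have hdep : ¬LinearIndependent K ![c, x] := by
    rw [← crossProduct_ne_zero_iff_linearIndependent, not_not, hcx]
  rw [LinearIndependent.pair_iff' hc, not_forall_not] at hdep
  obtain ⟨a, rfl⟩ := hdep
  exact Submodule.smul_mem _ a (Submodule.mem_span_singleton_self c)

theorem ker_dotProductBilin_inf_ker_dotProductBilin {u v : Fin 3 → K} (huv : u ⨯₃ v ≠ 0) :
    LinearMap.ker (dotProductBilin K K u) ⊓ LinearMap.ker (dotProductBilin K K v) =
      Submodule.span K {u ⨯₃ v} := by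
  apply le_antisymm
  · rintro x ⟨hux, hvx⟩
    simp only [SetLike.mem_coe, LinearMap.mem_ker, dotProductBilin_apply_apply] at hux hvx
    refine mem_span_singleton_of_cross_eq_zero huv ?_
    rw [cross_cross_eq_smul_sub_smul, hux, hvx, zero_smul, zero_smul, sub_zero]
  · rw [Submodule.span_singleton_le_iff_mem]
    exact ⟨dot_self_cross u v, dot_cross_self u v⟩

end Field

section OrderedField

variable {K : Type*} [Field K] [LinearOrder K] [IsStrictOrderedRing K]

theorem dotProductBilin_ne_zero {v : Fin 3 → K} (hv : v ≠ 0) : dotProductBilin K K v ≠ 0 :=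
  fun h ↦ hv (dotProduct_self_eq_zero.mp (LinearMap.congr_fun h v))

theorem linearIndependent_cross_cross_cross {v w : Fin 3 → K} (hvw : v ⨯₃ w ≠ 0) :
    LinearIndependent K ![v ⨯₃ w, v ⨯₃ (v ⨯₃ w)] := by
  have hv : v ≠ 0 := by rintro rfl; simp at hvw
  rw [← crossProduct_ne_zero_iff_linearIndependent, cross_cross_eq_smul_sub_smul',
    dot_self_cross, zero_smul, sub_zero]
  exact smul_ne_zero (mt dotProduct_self_eq_zero.mp hvw) hv

theorem span_cross_cross_cross_eq_ker_dotProductBilin {v w : Fin 3 → K} (hvw : v ⨯₃ w ≠ 0) :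
    Submodule.span K {v ⨯₃ w, v ⨯₃ (v ⨯₃ w)} = LinearMap.ker (dotProductBilin K K v) := by
  have hv : v ≠ 0 := by rintro rfl; simp at hvw
  apply Submodule.eq_of_le_of_finrank_eq
  · rw [Submodule.span_le]
    rintro x (rfl | rfl) <;> exact dot_self_cross _ _
  · have hspan := finrank_span_eq_card (linearIndependent_cross_cross_cross hvw)
    have hker := Module.Dual.finrank_ker_add_one_of_ne_zero (dotProductBilin_ne_zero hv)
    rw [range_cons, range_cons, range_empty, Set.union_empty, Set.singleton_union,
      Fintype.card_fin] at hspan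
    rw [Module.finrank_fin_fun] at hker
    omega

end OrderedField

/-- If `(D₁ × D₂)·D₃ ≠ 0`, then the plane
`Π₁₂ = ⟨D₁ × D₂, D₁ × (D₁ × D₂)⟩` and the plane `Π₂₃ = ⟨D₂ × D₃, D₂ × (D₂ × D₃)⟩`
intersect exactly in the line spanned by `D₁ × D₂`. -/
theorem planes_intersection (D₁ D₂ D₃ : Fin 3 → ℝ)
    (h : (D₁ ⨯₃ D₂) ⬝ᵥ D₃ ≠ 0) :
    Submodule.span ℝ ({D₁ ⨯₃ D₂, D₁ ⨯₃ (D₁ ⨯₃ D₂)} : Set (Fin 3 → ℝ)) ⊓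
      Submodule.span ℝ ({D₂ ⨯₃ D₃, D₂ ⨯₃ (D₂ ⨯₃ D₃)} : Set (Fin 3 → ℝ)) =
    Submodule.span ℝ ({D₁ ⨯₃ D₂} : Set (Fin 3 → ℝ)) := by
  have h₁₂ : D₁ ⨯₃ D₂ ≠ 0 := by
    rintro h₀
    simp [h₀] at h
  have h₂₃ : D₂ ⨯₃ D₃ ≠ 0 := by
    rintro h₀
    rw [dotProduct_comm, triple_product_permutation, h₀, dotProduct_zero] at h
    exact h rfl
  rw [span_cross_cross_cross_eq_ker_dotProductBilin h₁₂,
    span_cross_cross_cross_eq_ker_dotProductBilin h₂₃,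
    ker_dotProductBilin_inf_ker_dotProductBilin h₁₂]
end

section
/- For all real numbers a_j, b_j, c_j, d_j, e_j (j = 1, 2, 3), consider the polynomials q₃ = a₃ρ₂² + b₃ρ₁² + c₃ρ₂ + d₃ρ₁ + e₃, q₁ = a₁ρ₃² + b₁ρ₂² + c₁ρ₃ + d₁ρ₂ + e₁, q₂ = a₂ρ₁² + b₂ρ₃² + c₂ρ₁ + d₂ρ₃ + e₂ in the variables ρ₁, ρ₂, ρ₃. Let r = Res(q₃, q₂, ρ₁) be the resultant of q₃ and q₂ with respect to ρ₁ (a polynomial in ρ₂, ρ₃), and let 𝔮 = Res(r, q₁, ρ₃) be the resultant of r and q₁ with respect to ρ₃. Then 𝔮 is a univariate polynomial in ρ₂ of degree at most 8. -/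
open Polynomial

/-! We work with the tower `ℝ[ρ₂][ρ₃][ρ₁]`: the innermost polynomial variable is
`ρ₂`, the next one is `ρ₃`, and the outermost one is `ρ₁`.  Thus
`q₃, q₂ ∈ (ℝ[ρ₂][ρ₃])[ρ₁]`, the resultant `r = Res(q₃, q₂, ρ₁)` lies in
`ℝ[ρ₂][ρ₃]`, `q₁ ∈ ℝ[ρ₂][ρ₃]`, and `𝔮 = Res(r, q₁, ρ₃)` lies in `ℝ[ρ₂]`. -/

/-- The variable `ρ₂` as an element of `ℝ[ρ₂][ρ₃]`. -/
noncomputable def ρ₂ : Polynomial (Polynomial ℝ) := Polynomial.C Polynomial.X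

/-- The variable `ρ₃` as an element of `ℝ[ρ₂][ρ₃]`. -/
noncomputable def ρ₃ : Polynomial (Polynomial ℝ) := Polynomial.X

/-- A real constant, as an element of `ℝ[ρ₂][ρ₃]`. -/
noncomputable def cst (x : ℝ) : Polynomial (Polynomial ℝ) :=
  Polynomial.C (Polynomial.C x)

/-!
A Bézout-type bound. Filter a ring by degree. If the coefficient of `xᵏ` in `f` has degree
`≤ m - k` and that in `g` has degree `≤ n - k`, then the entry `(i, j)` of their Sylvester
matrix has degree `≤ wⱼ - i` for suitable column weights `wⱼ` with `∑ wⱼ - ∑ i = m n`, so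
every term of the determinant, hence `Res(f, g)`, has degree `≤ m n`. Applied to `q₃, q₂`,
of total degree `2` in `ρ₁, ρ₂, ρ₃`, this gives `r` of total degree `≤ 4` in `ρ₂, ρ₃`;
applied to `r` and `q₁`, of total degree `2`, it gives `deg 𝔮 ≤ 8`.
-/

section Filtration

variable {R : Type*} [Ring R]

def constantFiltration (R : Type*) [Ring R] (d : ℤ) : AddSubgroup R :=
  if 0 ≤ d then ⊤ else ⊥

@[simp]
theorem mem_constantFiltration {d : ℤ} {x : R} :
    x ∈ constantFiltration R d ↔ 0 ≤ d ∨ x = 0 := by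
  unfold constantFiltration
  split_ifs with h <;> simp [h]

theorem constantFiltration_mono : Monotone (constantFiltration R) := by
  intro d e hde x hx
  rw [mem_constantFiltration] at hx ⊢
  exact hx.imp_left hde.trans'

instance : SetLike.GradedMonoid (constantFiltration R) where
  one_mem := by simp
  mul_mem := by
    intro i j a b ha hb
    simp only [mem_constantFiltration] at *
    rcases ha with ha | rfl
    · rcases hb with hb | rfl
      · omega
      · simp
    · simp

namespace Polynomial

/-- `X` gets weight `1`; iterated from `constantFiltration`, this is the filtration of
`R[X₁]...[Xₙ]` by total degree. The index is an integer so that `p ∈ totalDegreeFiltration A d`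
also forces the coefficients of `Xᵏ` with `k > d` into the negative part of `A`. -/
def totalDegreeFiltration (A : ℤ → AddSubgroup R) (d : ℤ) : AddSubgroup R[X] where
  carrier := {p | ∀ k : ℕ, p.coeff k ∈ A (d - k)}
  zero_mem' k := by simp
  add_mem' hp hq k := by simpa using add_mem (hp k) (hq k)
  neg_mem' hp k := by simpa using neg_mem (hp k)

variable {A : ℤ → AddSubgroup R}

theorem totalDegreeFiltration_mono (hA : Monotone A) : Monotone (totalDegreeFiltration A) :=
  fun _ _ hde _ hp k => hA (by omega) (hp k)

instance [SetLike.GradedMonoid A] : SetLike.GradedMonoid (totalDegreeFiltration A) where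
  one_mem k := by
    rw [coeff_one]
    split_ifs with hk
    · subst hk; simpa using SetLike.GradedOne.one_mem
    · exact zero_mem _
  mul_mem := by
    intro i j p q hp hq k
    rw [coeff_mul]
    refine sum_mem fun x hx => ?_
    have hindex : i + j - (k : ℤ) = (i - x.1) + (j - x.2) := by
      rw [Finset.HasAntidiagonal.mem_antidiagonal] at hx
      omega
    rw [hindex]
    exact SetLike.mul_mem_graded (hp x.1) (hq x.2)

theorem C_mem_totalDegreeFiltration {d : ℤ} {a : R} (ha : a ∈ A d) :
    C a ∈ totalDegreeFiltration A d := by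
  intro k
  rw [coeff_C]
  split_ifs with hk
  · subst hk; simpa using ha
  · exact zero_mem _

theorem X_mem_totalDegreeFiltration [SetLike.GradedOne A] : X ∈ totalDegreeFiltration A 1 := by
  intro k
  rw [coeff_X]
  split_ifs with hk
  · subst hk; simpa using SetLike.GradedOne.one_mem
  · exact zero_mem _

theorem natDegree_le_of_mem_totalDegreeFiltration {d : ℕ} {p : R[X]}
    (hp : p ∈ totalDegreeFiltration (constantFiltration R) d) : p.natDegree ≤ d := by
  rw [natDegree_le_iff_coeff_eq_zero]
  intro k hk
  have := hp k
  rw [mem_constantFiltration] at this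
  exact this.resolve_left (by omega)

end Polynomial

theorem quadratic_mem_two {A : ℤ → AddSubgroup R} [SetLike.GradedMonoid A] (hA : Monotone A)
    {x y a b c d e : R} (hx : x ∈ A 1) (hy : y ∈ A 1) (ha : a ∈ A 0) (hb : b ∈ A 0)
    (hc : c ∈ A 0) (hd : d ∈ A 0) (he : e ∈ A 0) :
    a * x ^ 2 + b * y ^ 2 + c * x + d * y + e ∈ A 2 := by
  have hsq {z : R} (hz : z ∈ A 1) {s : R} (hs : s ∈ A 0) : s * z ^ 2 ∈ A 2 := by
    simpa using SetLike.mul_mem_graded hs (SetLike.pow_mem_graded 2 hz)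
  have hlin {z : R} (hz : z ∈ A 1) {s : R} (hs : s ∈ A 0) : s * z ∈ A 2 :=
    hA (show (1 : ℤ) ≤ 2 by norm_num) (by simpa using SetLike.mul_mem_graded hs hz)
  exact add_mem (add_mem (add_mem (add_mem (hsq hx ha) (hsq hy hb)) (hlin hx hc))
    (hlin hy hd)) (hA (by norm_num) he)

end Filtration

section Resultant

variable {R : Type*} [CommRing R] {A : ℤ → AddSubgroup R}

theorem Matrix.det_mem_of_apply_mem [SetLike.GradedMonoid A] {ι : Type*} [Fintype ι]
    [DecidableEq ι] (M : Matrix ι ι R) (u v : ι → ℤ)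
    (hM : ∀ i j, M i j ∈ A (v j - u i)) :
    M.det ∈ A (∑ j, v j - ∑ i, u i) := by
  rw [Matrix.det_apply]
  refine sum_mem fun σ _ => ?_
  rw [Units.smul_def]
  refine AddSubgroup.zsmul_mem _ ?_ _
  have hindex : ∑ j, v j - ∑ i, u i = ∑ j, (v j - u (σ j)) := by
    rw [Finset.sum_sub_distrib, Equiv.sum_comp σ u]
  rw [hindex]
  exact SetLike.prod_mem_graded A _ _ fun j _ => hM (σ j) j

variable {m n : ℕ} {f g : R[X]}

theorem sylvesterMatrix_apply_mem (hf : f ∈ totalDegreeFiltration A m)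
    (hg : g ∈ totalDegreeFiltration A n) (i j : Fin (m + n)) :
    sylvesterMatrix m n f g i j ∈ A ((if (j : ℕ) < n then m + j else j : ℤ) - i) := by
  simp only [sylvesterMatrix, Matrix.of_apply]
  split_ifs with hjn hji hji
  · convert hf (i - j) using 2
    omega
  · exact zero_mem _
  · convert hg (i - (j - n)) using 2
    omega
  · exact zero_mem _

theorem resultant_mem_of_mem_totalDegreeFiltration [SetLike.GradedMonoid A]
    (hf : f ∈ totalDegreeFiltration A m) (hg : g ∈ totalDegreeFiltration A n) :
    resultant m n f g ∈ A (m * n) := by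
  have hweights : ∑ j : Fin (m + n), (if (j : ℕ) < n then m + j else j : ℤ)
      - ∑ i : Fin (m + n), (i : ℤ) = m * n := by
    have hterm (j : Fin (m + n)) : (if (j : ℕ) < n then m + j else j : ℤ) - j
        = if (j : ℕ) < n then (m : ℤ) else 0 := by
      split_ifs <;> ring
    rw [← Finset.sum_sub_distrib, Finset.sum_congr rfl fun j _ => hterm j, Finset.sum_ite,
      Finset.sum_const_zero, add_zero, Finset.sum_const, Fin.card_filter_val_lt]
    simp [mul_comm]
  rw [_root_.resultant, ← hweights]
  exact Matrix.det_mem_of_apply_mem _ _ _ (sylvesterMatrix_apply_mem hf hg)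

end Resultant

/-- For all real `a_j, b_j, c_j, d_j, e_j` (`j = 1,2,3`), with
`q₃ = a₃ρ₂² + b₃ρ₁² + c₃ρ₂ + d₃ρ₁ + e₃`, `q₁ = a₁ρ₃² + b₁ρ₂² + c₁ρ₃ + d₁ρ₂ + e₁`,
`q₂ = a₂ρ₁² + b₂ρ₃² + c₂ρ₁ + d₂ρ₃ + e₂`, the resultant `r = Res(q₃, q₂, ρ₁)`
(a polynomial in `ρ₂, ρ₃`, of degree at most `4` in `ρ₃`) and then
`𝔮 = Res(r, q₁, ρ₃)` give a univariate polynomial `𝔮` in `ρ₂` of degree at most `8`. -/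
theorem resultant_three_arcs_degree_le_eight
    (a₁ a₂ a₃ b₁ b₂ b₃ c₁ c₂ c₃ d₁ d₂ d₃ e₁ e₂ e₃ : ℝ)
    (q₃ q₂ : Polynomial (Polynomial (Polynomial ℝ)))
    (q₁ r : Polynomial (Polynomial ℝ)) (Q : Polynomial ℝ)
    (hq₃ : q₃ = Polynomial.C (cst a₃ * ρ₂ ^ 2) + Polynomial.C (cst b₃) * Polynomial.X ^ 2
        + Polynomial.C (cst c₃ * ρ₂) + Polynomial.C (cst d₃) * Polynomial.X
        + Polynomial.C (cst e₃))
    (hq₁ : q₁ = cst a₁ * ρ₃ ^ 2 + cst b₁ * ρ₂ ^ 2 + cst c₁ * ρ₃ + cst d₁ * ρ₂ + cst e₁)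
    (hq₂ : q₂ = Polynomial.C (cst a₂) * Polynomial.X ^ 2 + Polynomial.C (cst b₂ * ρ₃ ^ 2)
        + Polynomial.C (cst c₂) * Polynomial.X + Polynomial.C (cst d₂ * ρ₃)
        + Polynomial.C (cst e₂))
    (hr : r = resultant 2 2 q₃ q₂)
    (hQ : Q = resultant 4 2 r q₁) :
    Q.natDegree ≤ 8 := by
  set T := totalDegreeFiltration (totalDegreeFiltration (constantFiltration ℝ))
  have hT : Monotone T :=
    totalDegreeFiltration_mono (totalDegreeFiltration_mono constantFiltration_mono)
  have hcst (x : ℝ) : cst x ∈ T 0 :=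
    C_mem_totalDegreeFiltration (C_mem_totalDegreeFiltration (by simp))
  have hCcst (x : ℝ) : C (cst x) ∈ totalDegreeFiltration T 0 :=
    C_mem_totalDegreeFiltration (hcst x)
  have hρ₂ : ρ₂ ∈ T 1 := C_mem_totalDegreeFiltration X_mem_totalDegreeFiltration
  have hρ₃ : ρ₃ ∈ T 1 := X_mem_totalDegreeFiltration
  have hq₃T : q₃ ∈ totalDegreeFiltration T 2 := by
    rw [hq₃]
    simp only [map_mul, map_pow]
    exact quadratic_mem_two (totalDegreeFiltration_mono hT) (C_mem_totalDegreeFiltration hρ₂)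
      X_mem_totalDegreeFiltration (hCcst a₃) (hCcst b₃) (hCcst c₃) (hCcst d₃) (hCcst e₃)
  have hq₂T : q₂ ∈ totalDegreeFiltration T 2 := by
    rw [hq₂]
    simp only [map_mul, map_pow]
    exact quadratic_mem_two (totalDegreeFiltration_mono hT) X_mem_totalDegreeFiltration
      (C_mem_totalDegreeFiltration hρ₃) (hCcst a₂) (hCcst b₂) (hCcst c₂) (hCcst d₂) (hCcst e₂)
  have hq₁T : q₁ ∈ T 2 :=
    hq₁ ▸ quadratic_mem_two hT hρ₃ hρ₂ (hcst a₁) (hcst b₁) (hcst c₁) (hcst d₁) (hcst e₁)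
  have hrT : r ∈ T 4 := by
    simpa [hr] using resultant_mem_of_mem_totalDegreeFiltration (m := 2) (n := 2) hq₃T hq₂T
  have hQT : Q ∈ totalDegreeFiltration (constantFiltration ℝ) (8 : ℕ) := by
    simpa [hQ] using resultant_mem_of_mem_totalDegreeFiltration (m := 4) (n := 2) hrT hq₁T
  exact natDegree_le_of_mem_totalDegreeFiltration hQT
end
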